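/- arXiv:2012.03052 — 8 statements merged into one kernel-verified Lean document; each statement's English description precedes it below -/
import Mathlib

section
/- For every integer y ≥ 1 and every integer c, the image of ℤ under the map n ↦ ⌊((y+1)·n + c)/y⌋ is exactly the set of integers p with p ≢ −1 − c (mod y+1); that is, the map eliminates precisely one residue class modulo y+1, an arithmetic progression with common difference y+1. -/
theorem sef_range (y c : ℤ) (hy : 1 ≤ y) :
    Set.range (fun n : ℤ => ⌊(((y : ℚ) + 1) * n + c) / y⌋) =
      {p : ℤ | ¬ p ≡ -1 - c [ZMOD (y + 1)]} := by
  have hy0 : (0:ℤ) < y := by omega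
  have hfloor : ∀ n : ℤ, ⌊(((y : ℚ) + 1) * n + c) / y⌋ = ((y+1)*n + c) / y := by
    intro n
    have h1 : (((y : ℚ) + 1) * n + c) = (((y+1)*n + c : ℤ) : ℚ) := by push_cast; ring
    have h2 : (y : ℚ) = ((y.toNat : ℕ) : ℚ) := by
      exact_mod_cast (Int.toNat_of_nonneg hy0.le).symm
    rw [h1, h2, Rat.floor_intCast_div_natCast, Int.toNat_of_nonneg hy0.le]
  ext p
  simp only [Set.mem_range, Set.mem_setOf_eq, hfloor]
  constructor
  · rintro ⟨n, rfl⟩ h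
    rw [Int.modEq_iff_dvd] at h
    obtain ⟨k, hk⟩ := h
    set m := (y+1)*n + c with hm
    have h1 : y * (m / y) + m % y = m := Int.mul_ediv_add_emod m y
    have h2 : 0 ≤ m % y := Int.emod_nonneg m hy0.ne'
    have h3 : m % y < y := Int.emod_lt_of_pos m hy0
    have hd1 : (m - y * (m / y)) + 1 = (y+1) * (n + c + 1 + y*k) := by
      rw [hm]; linear_combination y * hk
    have hle : y + 1 ≤ (m - y * (m / y)) + 1 := by
      refine Int.le_of_dvd (by omega) ⟨n + c + 1 + y*k, hd1⟩
    omega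
  · intro h
    rw [Int.modEq_iff_dvd] at h
    set a := y * p - c with ha
    set s := (a + y) % (y+1) with hs
    set n := (a + y) / (y+1) with hn
    have heq : (y+1) * n + s = a + y := Int.mul_ediv_add_emod (a+y) (y+1)
    have hs0 : 0 ≤ s := Int.emod_nonneg _ (by omega)
    have hs1 : s < y + 1 := Int.emod_lt_of_pos _ (by omega)
    have hspos : 1 ≤ s := by
      by_contra hc
      have hs00 : s = 0 := by omega
      exact h ⟨n - p - 1, by linear_combination -heq + hs00⟩
    refine ⟨n, ?_⟩
    have hval : (y+1)*n + c = (y - s) + p * y := by linear_combination heq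
    rw [hval, Int.add_mul_ediv_right _ _ hy0.ne',
      Int.ediv_eq_zero_of_lt (by omega) (by omega), zero_add]
end

section
/- Let y ≥ 1 and x₁ be integers with 1 ≤ x₁ ≤ y + 1, and set c = y − x₁. Then the set of values { ⌊((y+1)·n + c)/y⌋ : n a positive integer } equals the set of positive integers m with m ≢ x₁ (mod y+1); that is, SEF with this choice of constant eliminates from the positive integers exactly the equidistant sequence x₁, x₁ + (y+1), x₁ + 2(y+1), … . -/
private lemma floor_div_iff (y m N : ℤ) (hy : 0 < y) :
    m = ⌊(N : ℚ) / y⌋ ↔ y * m ≤ N ∧ N < y * (m + 1) := by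
  have hyQ : (0 : ℚ) < (y : ℚ) := by exact_mod_cast hy
  rw [eq_comm, Int.floor_eq_iff, le_div_iff₀ hyQ, div_lt_iff₀ hyQ]
  constructor
  · rintro ⟨h1, h2⟩
    constructor
    · have h : ((y * m : ℤ) : ℚ) ≤ (N : ℚ) := by push_cast; nlinarith
      exact_mod_cast h
    · have h : ((N : ℤ) : ℚ) < ((y * (m + 1) : ℤ) : ℚ) := by push_cast; nlinarith
      exact_mod_cast h
  · rintro ⟨h1, h2⟩
    have h1' : ((y * m : ℤ) : ℚ) ≤ (N : ℚ) := by exact_mod_cast h1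
    have h2' : ((N : ℤ) : ℚ) < ((y * (m + 1) : ℤ) : ℚ) := by exact_mod_cast h2
    push_cast at h1' h2'
    constructor <;> nlinarith

theorem sef_eliminates_sequence (y x₁ : ℤ) (hy : 1 ≤ y) (hx1 : 1 ≤ x₁)
    (hx2 : x₁ ≤ y + 1) :
    {m : ℤ | ∃ n : ℤ, 0 < n ∧ m = ⌊(((y : ℚ) + 1) * n + (y - x₁)) / y⌋} =
      {m : ℤ | 0 < m ∧ ¬ m ≡ x₁ [ZMOD (y + 1)]} := by
  have hy0 : (0 : ℤ) < y := hy
  have hy1 : (0 : ℤ) < y + 1 := by linarith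
  ext m
  simp only [Set.mem_setOf_eq]
  constructor
  · rintro ⟨n, hn, hm⟩
    have hcast : (((y : ℚ)) + 1) * n + ((y : ℚ) - (x₁ : ℚ))
        = (((y + 1) * n + (y - x₁) : ℤ) : ℚ) := by push_cast; ring
    rw [hcast] at hm
    rw [floor_div_iff y m ((y + 1) * n + (y - x₁)) hy0] at hm
    obtain ⟨h1, h2⟩ := hm
    have hn1 : 1 ≤ n := hn
    have hmul : y + 1 ≤ (y + 1) * n := le_mul_of_one_le_right (by linarith) hn1
    have hmpos : 0 < m := by nlinarith
    refine ⟨hmpos, fun hcon => ?_⟩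
    obtain ⟨k, hk⟩ := (Int.modEq_iff_dvd.mp hcon)  -- y+1 ∣ x₁ - m
    -- x₁ - m = (y+1) * k
    have hlow : (y + 1) * m - y ≤ (y + 1) * (n - k) := by nlinarith
    have hhigh : (y + 1) * (n - k) < (y + 1) * m := by nlinarith
    set d := m - (n - k) with hd
    have hdpos : 0 < (y + 1) * d := by nlinarith
    have hdle : (y + 1) * d ≤ y := by nlinarith
    have hd1 : 1 ≤ d := by nlinarith
    nlinarith
  · rintro ⟨hmpos, hne⟩
    set a : ℤ := y * (m - 1) + x₁ with ha
    set n : ℤ := (a + y) / (y + 1) with hn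
    set r : ℤ := (a + y) % (y + 1) with hr
    have hdm : (y + 1) * n + r = a + y := by
      rw [hn, hr]; exact Int.mul_ediv_add_emod (a + y) (y + 1)
    have hr0 : 0 ≤ r := Int.emod_nonneg _ (by linarith)
    have hrlt : r < y + 1 := Int.emod_lt_of_pos _ hy1
    have hrne : r ≠ 0 := by
      intro h0
      apply hne
      have hdvd : (y + 1) ∣ (a + y) := Int.dvd_of_emod_eq_zero h0
      have : (y + 1) ∣ (x₁ - m) := by
        obtain ⟨k, hk⟩ := hdvd
        refine ⟨k - m, ?_⟩
        have : y * (m - 1) + x₁ + y = (y + 1) * k := hk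
        ring_nf
        ring_nf at this
        linarith
      exact Int.modEq_iff_dvd.mpr this
    have hnlow : a ≤ (y + 1) * n := by omega
    have hnhigh : (y + 1) * n ≤ a + y - 1 := by omega
    have hnpos : 0 < n := by nlinarith
    refine ⟨n, hnpos, ?_⟩
    have hcast : (((y : ℚ)) + 1) * n + ((y : ℚ) - (x₁ : ℚ))
        = (((y + 1) * n + (y - x₁) : ℤ) : ℚ) := by push_cast; ring
    rw [hcast, floor_div_iff y m ((y + 1) * n + (y - x₁)) hy0]
    constructor <;> nlinarith
end

section
/- For every integer y ≥ 1, every integer c, and every integer n, one has ⌈(y·⌊((y+1)·n + c)/y⌋ − c)/(y+1)⌉ = n; that is, the map p ↦ ⌈(y·p − c)/(y+1)⌉ (ISEF) is a left inverse of SEF on ℤ. -/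
theorem isef_left_inverse (y c : ℤ) (hy : 1 ≤ y) (n : ℤ) :
    ⌈((y : ℚ) * ⌊(((y : ℚ) + 1) * n + c) / y⌋ - c) / (y + 1)⌉ = n := by
  have hy0 : (0:ℤ) < y := hy
  have hfl : ⌊(((y : ℚ) + 1) * n + c) / y⌋ = ((y+1)*n + c) / y := by
    have h : (((y : ℚ) + 1) * n + c) = (((y+1)*n + c : ℤ) : ℚ) := by push_cast; ring
    have hyt : ((y.toNat : ℤ) : ℚ) = (y:ℚ) := by
      have : (y.toNat : ℤ) = y := by omega
      exact_mod_cast congrArg (fun z : ℤ => (z:ℚ)) this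
    have h2 := Rat.floor_intCast_div_natCast ((y+1)*n + c) y.toNat
    rw [h]
    rw [show ((y:ℚ)) = ((y.toNat : ℕ) : ℚ) from by exact_mod_cast hyt.symm, h2]
    congr 1
    omega
  rw [hfl]
  set q := ((y+1)*n + c) / y with hq
  set r := ((y+1)*n + c) % y with hr
  have hkey : y * q = (y+1)*n + c - r := by
    have h2 := Int.mul_ediv_add_emod ((y+1)*n + c) y
    rw [hq, hr]; omega
  have hr0 : 0 ≤ r := Int.emod_nonneg _ (by omega)
  have hrlt : r < y := Int.emod_lt_of_pos _ hy0
  have hyq : (0:ℚ) < (y:ℚ) + 1 := by positivity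
  rw [Int.ceil_eq_iff]
  have hx : ((y : ℚ) * q - c) / (y + 1) = n - r / (y+1) := by
    have : (y:ℚ) * q = ((y:ℚ)+1)*n + c - r := by
      have h3 : ((y * q : ℤ) : ℚ) = (((y+1)*n + c - r : ℤ) : ℚ) := by rw [hkey]
      push_cast at h3
      linarith
    rw [this]
    field_simp
    ring
  rw [hx]
  constructor
  · have : (r:ℚ) / (y+1) < 1 := by
      rw [div_lt_one hyq]
      exact_mod_cast by omega
    linarith
  · have : (0:ℚ) ≤ (r:ℚ) / (y+1) := by positivity
    linarith
end

section
/- For every integer y ≥ 1, every integer c, and every integer p with p ≢ −1 − c (mod y+1), one has ⌊((y+1)·⌈(y·p − c)/(y+1)⌉ + c)/y⌋ = p; that is, ISEF is a right inverse of SEF on the image of SEF, namely on all integers outside the eliminated residue class modulo y+1. -/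
theorem isef_right_inverse (y c : ℤ) (hy : 1 ≤ y) (p : ℤ)
    (hp : ¬ p ≡ -1 - c [ZMOD (y + 1)]) :
    ⌊(((y : ℚ) + 1) * ⌈((y : ℚ) * p - c) / (y + 1)⌉ + c) / y⌋ = p := by
  have hy0 : (0:ℚ) < (y:ℚ) := by exact_mod_cast hy.trans_lt' zero_lt_one
  have hy1 : (0:ℚ) < (y:ℚ) + 1 := by linarith
  set x : ℚ := ((y : ℚ) * p - c) / (y + 1) with hx
  set k : ℤ := ⌈x⌉ with hk
  have h1 : x ≤ (k:ℚ) := Int.le_ceil x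
  have h2 : (k:ℚ) < x + 1 := Int.ceil_lt_add_one x
  have hxval : x * ((y:ℚ) + 1) = (y:ℚ) * p - c := by
    rw [hx]; field_simp
  -- lower bound in ℤ
  have hloQ : (y:ℚ) * p - c ≤ ((y:ℚ) + 1) * k := by
    have := mul_le_mul_of_nonneg_right h1 hy1.le
    rw [hxval] at this; linarith
  have hlo : y * p ≤ (y + 1) * k + c := by
    have : ((y * p : ℤ) : ℚ) ≤ (((y + 1) * k + c : ℤ) : ℚ) := by push_cast; linarith
    exact_mod_cast this
  -- upper bound (non-strict) in ℤ
  have hhiQ : ((y:ℚ) + 1) * k < (y:ℚ) * p - c + ((y:ℚ) + 1) := by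
    have := mul_lt_mul_of_pos_right h2 hy1
    rw [add_mul, hxval, one_mul] at this; linarith
  have hhi' : (y + 1) * k ≤ y * p - c + y := by
    have : (((y + 1) * k : ℤ) : ℚ) < ((y * p - c + y + 1 : ℤ) : ℚ) := by push_cast; linarith
    have : (y + 1) * k < y * p - c + y + 1 := by exact_mod_cast this
    omega
  have hne : (y + 1) * k ≠ y * p - c + y := by
    intro h
    exact hp (Int.modEq_iff_dvd.mpr ⟨k - p - 1, by linear_combination -h⟩)
  have hstrict : (y + 1) * k < y * p - c + y := lt_of_le_of_ne hhi' hne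
  rw [Int.floor_eq_iff]
  have hloQ' : ((y:ℚ)) * p ≤ ((y:ℚ) + 1) * k + c := by
    have : ((y * p : ℤ) : ℚ) ≤ (((y + 1) * k + c : ℤ) : ℚ) := by exact_mod_cast hlo
    push_cast at this; linarith
  have hhiQ' : ((y:ℚ) + 1) * k + c < (y:ℚ) * p + y := by
    have : (((y + 1) * k : ℤ) : ℚ) < ((y * p - c + y : ℤ) : ℚ) := by exact_mod_cast hstrict
    push_cast at this; linarith
  constructor
  · rw [le_div_iff₀ hy0]; linarith
  · rw [div_lt_iff₀ hy0]; push_cast; linarith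
end

section
/- The set { ⌊(10n + 8)/9⌋ : n a positive integer } equals the set of positive integers m with m ≢ 1 (mod 10); that is, this SEF instance eliminates from the positive integers exactly the sequence 1, 11, 21, 31, … . -/
lemma floor_aux (a : ℤ) : ⌊((a : ℚ)) / 9⌋ = a / 9 := by
  simpa using Rat.floor_intCast_div_natCast a 9

theorem sef_eliminates_1_mod_10 :
    {m : ℤ | ∃ n : ℤ, 0 < n ∧ m = ⌊(10 * (n : ℚ) + 8) / 9⌋} =
      {m : ℤ | 0 < m ∧ ¬ m ≡ 1 [ZMOD 10]} := by
  ext m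
  simp only [Set.mem_setOf_eq, Int.ModEq]
  constructor
  · rintro ⟨n, hn, rfl⟩
    have h2 : ⌊(10 * (n : ℚ) + 8) / 9⌋ = (10 * n + 8) / 9 := by
      rw [show (10 * (n : ℚ) + 8) = ((10 * n + 8 : ℤ) : ℚ) by push_cast; ring]
      exact floor_aux _
    rw [h2]
    omega
  · rintro ⟨hm, hmod⟩
    have hpos : 0 < 9 * m / 10 := by
      have : (1:ℤ) ≤ 9 * m / 10 := by
        rw [Int.le_ediv_iff_mul_le (by norm_num)]; omega
      omega
    refine ⟨9 * m / 10, hpos, ?_⟩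
    rw [show (10 * ((9 * m / 10 : ℤ) : ℚ) + 8) = ((10 * (9 * m / 10) + 8 : ℤ) : ℚ) by push_cast; ring,
      floor_aux]
    have hr : (9 * m) % 10 ≠ 9 := by rw [Int.mul_emod]; omega
    omega
end

section
/- The set { 2·⌊(3·⌊(10n + 8)/9⌋ + 1)/2⌋ + 1 : n a positive integer } equals the set of integers m > 3 that are coprime to 6 and satisfy m ≢ 5 (mod 30); that is, composing with the SEF instance ⌊(10n+8)/9⌋ removes from the values of the prime-2-and-3 formula exactly the first sequence of multiples of 5, namely 5, 35, 65, … . -/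
lemma cop6 (m : ℤ) : IsCoprime m 6 ↔ (m % 6 = 1 ∨ m % 6 = 5) := by
  have hcong : IsCoprime m 6 ↔ IsCoprime (m % 6) 6 := by
    constructor
    · intro h
      have h2 := h.add_mul_left_left (-(m / 6))
      rwa [show m + 6 * -(m / 6) = m % 6 by omega] at h2
    · intro h
      have h2 := h.add_mul_left_left (m / 6)
      rwa [show m % 6 + 6 * (m / 6) = m by omega] at h2
  rw [hcong]
  have h0 : 0 ≤ m % 6 := Int.emod_nonneg m (by norm_num)
  have h6 : m % 6 < 6 := Int.emod_lt_of_pos m (by norm_num)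
  rw [Int.isCoprime_iff_gcd_eq_one]
  interval_cases (m % 6) <;> simp <;> decide

lemma floor_helper (a : ℤ) (c : ℕ) : ⌊((a : ℚ)) / (c : ℚ)⌋ = a / (c : ℤ) :=
  Rat.floor_intCast_div_natCast a c

theorem formula_2_3_minus_first_5_sequence :
    {m : ℤ | ∃ n : ℤ, 0 < n ∧
        m = 2 * ⌊(3 * (⌊(10 * (n : ℚ) + 8) / 9⌋ : ℚ) + 1) / 2⌋ + 1} =
      {m : ℤ | 3 < m ∧ IsCoprime m 6 ∧ ¬ m ≡ 5 [ZMOD 30]} := by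
  have key : ∀ n : ℤ,
      (2 * ⌊(3 * ((⌊(10 * (n : ℚ) + 8) / 9⌋ : ℤ) : ℚ) + 1) / 2⌋ + 1)
        = 2 * ((3 * ((10 * n + 8) / 9) + 1) / 2) + 1 := by
    intro n
    have h1 : ⌊(10 * (n : ℚ) + 8) / 9⌋ = (10 * n + 8) / 9 := by
      rw [show (10 * (n : ℚ) + 8) = ((10 * n + 8 : ℤ) : ℚ) by push_cast; ring,
        show (9 : ℚ) = ((9 : ℕ) : ℚ) by norm_num]
      exact floor_helper _ _
    rw [h1]
    have h2 : (3 * (((10 * n + 8) / 9 : ℤ) : ℚ) + 1) / 2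
        = ((3 * ((10 * n + 8) / 9) + 1 : ℤ) : ℚ) / ((2 : ℕ) : ℚ) := by
      push_cast; ring
    rw [h2, floor_helper]
    norm_num
  ext m
  simp only [Set.mem_setOf_eq, cop6, Int.ModEq]
  constructor
  · rintro ⟨n, hn, rfl⟩
    rw [key]
    omega
  · rintro ⟨h3, hc, h30⟩
    obtain ⟨k, hk, hk2, hk10⟩ :
        ∃ k : ℤ, (m = 3 * k + 1 ∧ k % 2 = 0 ∨ m = 3 * k + 2 ∧ k % 2 = 1) ∧
          2 ≤ k ∧ k % 10 ≠ 1 := by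
      refine ⟨(m - 1) / 3, ?_, ?_, ?_⟩ <;> omega
    refine ⟨9 * k / 10, by omega, ?_⟩
    rw [key]
    have hkey : (10 * (9 * k / 10) + 8) / 9 = k := by
      obtain ⟨q, r, hqr, hr0, hr9⟩ : ∃ q r : ℤ, k = 10 * q + r ∧ 0 ≤ r ∧ r < 10 :=
        ⟨k / 10, k % 10, by omega, by omega, by omega⟩
      subst hqr
      interval_cases r <;> omega
    rw [hkey]
    omega
end

section
/- The set { 2·⌊(3·⌊(10·⌊(9n + 1)/8⌋ + 8)/9⌋ + 1)/2⌋ + 1 : n a positive integer } equals the set of integers m > 5 that are coprime to 30; that is, the formula eliminates from the integers greater than 5 exactly the multiples of 2, 3 and 5. -/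
/-!
Since every floor is taken of an integer over a positive integer, the formula is the integer
function `sieve235`, and shifting `n` by 8 shifts its value by 30. So everything reduces to one
period: `sieve235` maps `0, …, 7` onto `1, 7, 11, 13, 17, 19, 23, 29`, the residues coprime to 30.
-/

def sieve235 (n : ℤ) : ℤ := 2 * ((3 * ((10 * ((9 * n + 1) / 8) + 8) / 9) + 1) / 2) + 1

theorem floor_formula_eq_sieve235 (n : ℤ) :
    2 * ⌊(3 * (⌊(10 * (⌊(9 * (n : ℚ) + 1) / 8⌋ : ℚ) + 8) / 9⌋ : ℚ) + 1) / 2⌋ + 1 =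
      sieve235 n := by
  have h8 := Rat.floor_intCast_div_natCast (9 * n + 1) 8
  have h9 := Rat.floor_intCast_div_natCast (10 * ((9 * n + 1) / 8) + 8) 9
  have h2 := Rat.floor_intCast_div_natCast (3 * ((10 * ((9 * n + 1) / 8) + 8) / 9) + 1) 2
  push_cast at h8 h9 h2
  rw [h8, h9, h2]
  rfl

theorem sieve235_add_mul_eight (n q : ℤ) : sieve235 (n + q * 8) = sieve235 n + 30 * q := by
  have h8 : (9 * (n + q * 8) + 1) / 8 = (9 * n + 1) / 8 + 9 * q := by
    rw [show 9 * (n + q * 8) + 1 = 9 * n + 1 + 9 * q * 8 by ring,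
      Int.add_mul_ediv_right _ _ (by norm_num)]
  have h9 : ∀ x : ℤ, (10 * (x + 9 * q) + 8) / 9 = (10 * x + 8) / 9 + 10 * q := fun x => by
    rw [show 10 * (x + 9 * q) + 8 = 10 * x + 8 + 10 * q * 9 by ring,
      Int.add_mul_ediv_right _ _ (by norm_num)]
  have h2 : ∀ y : ℤ, (3 * (y + 10 * q) + 1) / 2 = (3 * y + 1) / 2 + 15 * q := fun y => by
    rw [show 3 * (y + 10 * q) + 1 = 3 * y + 1 + 15 * q * 2 by ring,
      Int.add_mul_ediv_right _ _ (by norm_num)]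
  unfold sieve235
  rw [h8, h9, h2]
  ring

theorem sieve235_eq_emod_eight_add (n : ℤ) : sieve235 n = sieve235 (n % 8) + 30 * (n / 8) := by
  rw [← sieve235_add_mul_eight, Int.emod_add_ediv_mul]

theorem sieve235_not_dvd (n : ℤ) : ¬ 2 ∣ sieve235 n ∧ ¬ 3 ∣ sieve235 n ∧ ¬ 5 ∣ sieve235 n := by
  have hres : ∀ r ∈ Finset.Ico (0 : ℤ) 8,
      ¬ 2 ∣ sieve235 r ∧ ¬ 3 ∣ sieve235 r ∧ ¬ 5 ∣ sieve235 r := by decide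
  have := hres (n % 8) (Finset.mem_Ico.2 ⟨by omega, by omega⟩)
  rw [sieve235_eq_emod_eight_add]
  omega

theorem five_lt_sieve235 {n : ℤ} (hn : 0 < n) : 5 < sieve235 n := by
  have hres : ∀ r ∈ Finset.Ico (0 : ℤ) 8, 0 < sieve235 r ∧ (5 < sieve235 r ↔ 0 < r) := by
    decide
  have := hres (n % 8) (Finset.mem_Ico.2 ⟨by omega, by omega⟩)
  rw [sieve235_eq_emod_eight_add]
  omega

/-- `⌊4m/15⌋ = ⌊8m/30⌋`: each block of 30 consecutive integers contains 8 residues coprime to 30,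
and for such a residue `s` the index of `s` among them is `⌊8s/30⌋`. -/
theorem sieve235_four_mul_div_fifteen {m : ℤ} (h2 : ¬ 2 ∣ m) (h3 : ¬ 3 ∣ m) (h5 : ¬ 5 ∣ m) :
    sieve235 (4 * m / 15) = m := by
  have hres : ∀ s ∈ Finset.Ico (0 : ℤ) 30, ¬ 2 ∣ s → ¬ 3 ∣ s → ¬ 5 ∣ s →
      sieve235 (4 * s / 15) = s := by decide
  have hs := hres (m % 30) (Finset.mem_Ico.2 ⟨by omega, by omega⟩) (by omega) (by omega) (by omega)
  have : 4 * m / 15 = 4 * (m % 30) / 15 + m / 30 * 8 := by omega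
  rw [this, sieve235_add_mul_eight, hs, Int.emod_add_mul_ediv]

theorem isCoprime_thirty_iff (m : ℤ) : IsCoprime m 30 ↔ ¬ 2 ∣ m ∧ ¬ 3 ∣ m ∧ ¬ 5 ∣ m := by
  have h5 : Prime (5 : ℤ) := Int.prime_iff_natAbs_prime.2 Nat.prime_five
  rw [show (30 : ℤ) = 2 * (3 * 5) by norm_num, IsCoprime.mul_right_iff, IsCoprime.mul_right_iff,
    isCoprime_comm, isCoprime_comm (y := 3), isCoprime_comm (y := 5),
    Int.prime_two.coprime_iff_not_dvd, Int.prime_three.coprime_iff_not_dvd, h5.coprime_iff_not_dvd]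

theorem formula_2_3_5_values :
    {m : ℤ | ∃ n : ℤ, 0 < n ∧
        m = 2 * ⌊(3 * (⌊(10 * (⌊(9 * (n : ℚ) + 1) / 8⌋ : ℚ) + 8) / 9⌋ : ℚ) + 1) / 2⌋ + 1} =
      {m : ℤ | 5 < m ∧ IsCoprime m 30} := by
  ext m
  simp only [Set.mem_ofPred_eq, floor_formula_eq_sieve235, isCoprime_thirty_iff]
  constructor
  · rintro ⟨n, hn, rfl⟩
    exact ⟨five_lt_sieve235 hn, sieve235_not_dvd n⟩
  · rintro ⟨hm, h2, h3, h5⟩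
    exact ⟨4 * m / 15, by omega, (sieve235_four_mul_div_fifteen h2 h3 h5).symm⟩
end

section
/- Define, for a positive integer n: k = ⌊(50·⌊(49n + 1)/48⌋ + 13)/49⌋, b = ⌊(54·⌊(53·⌊(52·⌊(51k + 20)/50⌋ + 24)/51⌋ + 31)/52⌋ + 35)/53⌋, and p(n) = 2·⌊(3·⌊(10·⌊(9·⌊(56·⌊(55b + 42)/54⌋ + 54)/55⌋ + 1)/8⌋ + 8)/9⌋ + 1)/2⌋ + 1. Then the set { p(n) : n a positive integer } equals the set of integers m > 7 that are coprime to 210; that is, the formula eliminates from the integers greater than 7 exactly the multiples of 2, 3, 5 and 7. -/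
set_option maxRecDepth 100000

/-- `k` from the paper's prime-7 formula. -/
def sefK (n : ℤ) : ℤ :=
  ⌊(50 * (⌊(49 * (n : ℚ) + 1) / 48⌋ : ℚ) + 13) / 49⌋

/-- `b` from the paper's prime-7 formula. -/
def sefB (n : ℤ) : ℤ :=
  ⌊(54 * (⌊(53 * (⌊(52 * (⌊(51 * (sefK n : ℚ) + 20) / 50⌋ : ℚ) + 24) / 51⌋ : ℚ) + 31) / 52⌋ : ℚ)
      + 35) / 53⌋

/-- `p` from the paper's prime-7 formula. -/
def sefP (n : ℤ) : ℤ :=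
  2 * ⌊(3 * (⌊(10 * (⌊(9 * (⌊(56 * (⌊(55 * (sefB n : ℚ) + 42) / 54⌋ : ℚ) + 54) / 55⌋ : ℚ)
      + 1) / 8⌋ : ℚ) + 8) / 9⌋ : ℚ) + 1) / 2⌋ + 1

lemma fshift (a b c d : ℚ) (x e : ℤ) (hc : c ≠ 0) (h : a * d = c * e) :
    ⌊(a * ((x:ℚ) + d) + b) / c⌋ = ⌊(a * (x:ℚ) + b) / c⌋ + e := by
  have h2 : (a * ((x:ℚ) + d) + b)/c = (a * (x:ℚ) + b)/c + e := by
    field_simp; linear_combination h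
  rw [h2, Int.floor_add_intCast]

lemma sefK_shift (n : ℤ) : sefK (n + 48) = sefK n + 50 := by
  unfold sefK
  push_cast
  rw [fshift 49 1 48 48 n 49 (by norm_num) (by norm_num)]
  push_cast
  rw [fshift 50 13 49 49 _ 50 (by norm_num) (by norm_num)]

lemma sefB_shift (n : ℤ) : sefB (n + 48) = sefB n + 54 := by
  unfold sefB
  rw [sefK_shift]
  push_cast
  rw [fshift 51 20 50 50 _ 51 (by norm_num) (by norm_num)]
  push_cast
  rw [fshift 52 24 51 51 _ 52 (by norm_num) (by norm_num)]
  push_cast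
  rw [fshift 53 31 52 52 _ 53 (by norm_num) (by norm_num)]
  push_cast
  rw [fshift 54 35 53 53 _ 54 (by norm_num) (by norm_num)]

lemma sefP_step (n : ℤ) : sefP (n + 48) = sefP n + 210 := by
  unfold sefP
  rw [sefB_shift]
  push_cast
  rw [fshift 55 42 54 54 _ 55 (by norm_num) (by norm_num)]
  push_cast
  rw [fshift 56 54 55 55 _ 56 (by norm_num) (by norm_num)]
  push_cast
  rw [fshift 9 1 8 56 _ 63 (by norm_num) (by norm_num)]
  push_cast
  rw [fshift 10 8 9 63 _ 70 (by norm_num) (by norm_num)]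
  push_cast
  rw [fshift 3 1 2 70 _ 105 (by norm_num) (by norm_num)]
  ring

lemma sefP_shift (n : ℤ) (q : ℕ) : sefP (n + 48 * q) = sefP n + 210 * q := by
  induction q with
  | zero => simp
  | succ k ih =>
    have h : n + 48 * ((k + 1 : ℕ) : ℤ) = (n + 48 * k) + 48 := by push_cast; ring
    rw [h, sefP_step, ih]
    push_cast
    ring
lemma pv1 : sefP 1 = 11 := by norm_num [sefP, sefB, sefK]
lemma pv2 : sefP 2 = 13 := by norm_num [sefP, sefB, sefK]
lemma pv3 : sefP 3 = 17 := by norm_num [sefP, sefB, sefK]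
lemma pv4 : sefP 4 = 19 := by norm_num [sefP, sefB, sefK]
lemma pv5 : sefP 5 = 23 := by norm_num [sefP, sefB, sefK]
lemma pv6 : sefP 6 = 29 := by norm_num [sefP, sefB, sefK]
lemma pv7 : sefP 7 = 31 := by norm_num [sefP, sefB, sefK]
lemma pv8 : sefP 8 = 37 := by norm_num [sefP, sefB, sefK]
lemma pv9 : sefP 9 = 41 := by norm_num [sefP, sefB, sefK]
lemma pv10 : sefP 10 = 43 := by norm_num [sefP, sefB, sefK]
lemma pv11 : sefP 11 = 47 := by norm_num [sefP, sefB, sefK]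
lemma pv12 : sefP 12 = 53 := by norm_num [sefP, sefB, sefK]
lemma pv13 : sefP 13 = 59 := by norm_num [sefP, sefB, sefK]
lemma pv14 : sefP 14 = 61 := by norm_num [sefP, sefB, sefK]
lemma pv15 : sefP 15 = 67 := by norm_num [sefP, sefB, sefK]
lemma pv16 : sefP 16 = 71 := by norm_num [sefP, sefB, sefK]
lemma pv17 : sefP 17 = 73 := by norm_num [sefP, sefB, sefK]
lemma pv18 : sefP 18 = 79 := by norm_num [sefP, sefB, sefK]
lemma pv19 : sefP 19 = 83 := by norm_num [sefP, sefB, sefK]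
lemma pv20 : sefP 20 = 89 := by norm_num [sefP, sefB, sefK]
lemma pv21 : sefP 21 = 97 := by norm_num [sefP, sefB, sefK]
lemma pv22 : sefP 22 = 101 := by norm_num [sefP, sefB, sefK]
lemma pv23 : sefP 23 = 103 := by norm_num [sefP, sefB, sefK]
lemma pv24 : sefP 24 = 107 := by norm_num [sefP, sefB, sefK]
lemma pv25 : sefP 25 = 109 := by norm_num [sefP, sefB, sefK]
lemma pv26 : sefP 26 = 113 := by norm_num [sefP, sefB, sefK]
lemma pv27 : sefP 27 = 121 := by norm_num [sefP, sefB, sefK]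
lemma pv28 : sefP 28 = 127 := by norm_num [sefP, sefB, sefK]
lemma pv29 : sefP 29 = 131 := by norm_num [sefP, sefB, sefK]
lemma pv30 : sefP 30 = 137 := by norm_num [sefP, sefB, sefK]
lemma pv31 : sefP 31 = 139 := by norm_num [sefP, sefB, sefK]
lemma pv32 : sefP 32 = 143 := by norm_num [sefP, sefB, sefK]
lemma pv33 : sefP 33 = 149 := by norm_num [sefP, sefB, sefK]
lemma pv34 : sefP 34 = 151 := by norm_num [sefP, sefB, sefK]
lemma pv35 : sefP 35 = 157 := by norm_num [sefP, sefB, sefK]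
lemma pv36 : sefP 36 = 163 := by norm_num [sefP, sefB, sefK]
lemma pv37 : sefP 37 = 167 := by norm_num [sefP, sefB, sefK]
lemma pv38 : sefP 38 = 169 := by norm_num [sefP, sefB, sefK]
lemma pv39 : sefP 39 = 173 := by norm_num [sefP, sefB, sefK]
lemma pv40 : sefP 40 = 179 := by norm_num [sefP, sefB, sefK]
lemma pv41 : sefP 41 = 181 := by norm_num [sefP, sefB, sefK]
lemma pv42 : sefP 42 = 187 := by norm_num [sefP, sefB, sefK]
lemma pv43 : sefP 43 = 191 := by norm_num [sefP, sefB, sefK]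
lemma pv44 : sefP 44 = 193 := by norm_num [sefP, sefB, sefK]
lemma pv45 : sefP 45 = 197 := by norm_num [sefP, sefB, sefK]
lemma pv46 : sefP 46 = 199 := by norm_num [sefP, sefB, sefK]
lemma pv47 : sefP 47 = 209 := by norm_num [sefP, sefB, sefK]
lemma pv48 : sefP 48 = 211 := by norm_num [sefP, sefB, sefK]

lemma mem_helper (m v : ℤ) (q : ℕ) (h : m = v + 210 * q) (h7 : 7 < v)
    (hc : IsCoprime v 210) : 7 < m ∧ IsCoprime m 210 :=
  ⟨by omega, by rw [h]; exact hc.add_mul_left_left _⟩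

lemma exists_helper (m v i : ℤ) (hi : 0 < i) (hv : sefP i = v) (q : ℕ)
    (hq : m = v + 210 * q) : ∃ n : ℤ, 0 < n ∧ m = sefP n :=
  ⟨i + 48 * q, by omega, by rw [sefP_shift, hv]; exact hq⟩

lemma residues : ∀ r : Fin 210, ¬2∣(r:ℕ) → ¬3∣(r:ℕ) → ¬5∣(r:ℕ) → ¬7∣(r:ℕ) → ((r:ℕ) = 11 ∨ (r:ℕ) = 13 ∨ (r:ℕ) = 17 ∨ (r:ℕ) = 19 ∨ (r:ℕ) = 23 ∨ (r:ℕ) = 29 ∨ (r:ℕ) = 31 ∨ (r:ℕ) = 37 ∨ (r:ℕ) = 41 ∨ (r:ℕ) = 43 ∨ (r:ℕ) = 47 ∨ (r:ℕ) = 53 ∨ (r:ℕ) = 59 ∨ (r:ℕ) = 61 ∨ (r:ℕ) = 67 ∨ (r:ℕ) = 71 ∨ (r:ℕ) = 73 ∨ (r:ℕ) = 79 ∨ (r:ℕ) = 83 ∨ (r:ℕ) = 89 ∨ (r:ℕ) = 97 ∨ (r:ℕ) = 101 ∨ (r:ℕ) = 103 ∨ (r:ℕ) = 107 ∨ (r:ℕ)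 = 109 ∨ (r:ℕ) = 113 ∨ (r:ℕ) = 121 ∨ (r:ℕ) = 127 ∨ (r:ℕ) = 131 ∨ (r:ℕ) = 137 ∨ (r:ℕ) = 139 ∨ (r:ℕ) = 143 ∨ (r:ℕ) = 149 ∨ (r:ℕ) = 151 ∨ (r:ℕ) = 157 ∨ (r:ℕ) = 163 ∨ (r:ℕ) = 167 ∨ (r:ℕ) = 169 ∨ (r:ℕ) = 173 ∨ (r:ℕ) = 179 ∨ (r:ℕ) = 181 ∨ (r:ℕ) = 187 ∨ (r:ℕ) = 191 ∨ (r:ℕ) = 193 ∨ (r:ℕ) = 197 ∨ (r:ℕ) = 199 ∨ (r:ℕ) = 209 ∨ (r:ℕ) = 1) := by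
  decide

theorem formula_2_3_5_7_values :
    {m : ℤ | ∃ n : ℤ, 0 < n ∧ m = sefP n} = {m : ℤ | 7 < m ∧ IsCoprime m 210} := by
  ext m
  simp only [Set.mem_setOf_eq]
  constructor
  · rintro ⟨n, hn, rfl⟩
    obtain ⟨q, hq⟩ : ∃ q : ℕ, (q : ℤ) = (n - 1) / 48 :=
      ⟨((n - 1) / 48).toNat, Int.toNat_of_nonneg (Int.ediv_nonneg (by omega) (by norm_num))⟩
    obtain ⟨r, hr⟩ : ∃ r, r = (n - 1) % 48 := ⟨_, rfl⟩
    have hn48 : n = (r + 1) + 48 * (q : ℤ) := by omega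
    have key : sefP n = sefP (r + 1) + 210 * q := by rw [hn48, sefP_shift]
    have hrb : 0 ≤ r := by omega
    have hrb2 : r < 48 := by omega
    interval_cases r
    · rw [show (0:ℤ) + 1 = 1 by norm_num, pv1] at key
      exact mem_helper _ 11 q key (by norm_num) (by norm_num)
    · rw [show (1:ℤ) + 1 = 2 by norm_num, pv2] at key
      exact mem_helper _ 13 q key (by norm_num) (by norm_num)
    · rw [show (2:ℤ) + 1 = 3 by norm_num, pv3] at key
      exact mem_helper _ 17 q key (by norm_num) (by norm_num)
    · rw [show (3:ℤ) + 1 = 4 by norm_num, pv4] at key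
      exact mem_helper _ 19 q key (by norm_num) (by norm_num)
    · rw [show (4:ℤ) + 1 = 5 by norm_num, pv5] at key
      exact mem_helper _ 23 q key (by norm_num) (by norm_num)
    · rw [show (5:ℤ) + 1 = 6 by norm_num, pv6] at key
      exact mem_helper _ 29 q key (by norm_num) (by norm_num)
    · rw [show (6:ℤ) + 1 = 7 by norm_num, pv7] at key
      exact mem_helper _ 31 q key (by norm_num) (by norm_num)
    · rw [show (7:ℤ) + 1 = 8 by norm_num, pv8] at key
      exact mem_helper _ 37 q key (by norm_num) (by norm_num)
    · rw [show (8:ℤ) + 1 = 9 by norm_num, pv9] at key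
      exact mem_helper _ 41 q key (by norm_num) (by norm_num)
    · rw [show (9:ℤ) + 1 = 10 by norm_num, pv10] at key
      exact mem_helper _ 43 q key (by norm_num) (by norm_num)
    · rw [show (10:ℤ) + 1 = 11 by norm_num, pv11] at key
      exact mem_helper _ 47 q key (by norm_num) (by norm_num)
    · rw [show (11:ℤ) + 1 = 12 by norm_num, pv12] at key
      exact mem_helper _ 53 q key (by norm_num) (by norm_num)
    · rw [show (12:ℤ) + 1 = 13 by norm_num, pv13] at key
      exact mem_helper _ 59 q key (by norm_num) (by norm_num)
    · rw [show (13:ℤ) + 1 = 14 by norm_num, pv14] at key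
      exact mem_helper _ 61 q key (by norm_num) (by norm_num)
    · rw [show (14:ℤ) + 1 = 15 by norm_num, pv15] at key
      exact mem_helper _ 67 q key (by norm_num) (by norm_num)
    · rw [show (15:ℤ) + 1 = 16 by norm_num, pv16] at key
      exact mem_helper _ 71 q key (by norm_num) (by norm_num)
    · rw [show (16:ℤ) + 1 = 17 by norm_num, pv17] at key
      exact mem_helper _ 73 q key (by norm_num) (by norm_num)
    · rw [show (17:ℤ) + 1 = 18 by norm_num, pv18] at key
      exact mem_helper _ 79 q key (by norm_num) (by norm_num)
    · rw [show (18:ℤ) + 1 = 19 by norm_num, pv19] at key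
      exact mem_helper _ 83 q key (by norm_num) (by norm_num)
    · rw [show (19:ℤ) + 1 = 20 by norm_num, pv20] at key
      exact mem_helper _ 89 q key (by norm_num) (by norm_num)
    · rw [show (20:ℤ) + 1 = 21 by norm_num, pv21] at key
      exact mem_helper _ 97 q key (by norm_num) (by norm_num)
    · rw [show (21:ℤ) + 1 = 22 by norm_num, pv22] at key
      exact mem_helper _ 101 q key (by norm_num) (by norm_num)
    · rw [show (22:ℤ) + 1 = 23 by norm_num, pv23] at key
      exact mem_helper _ 103 q key (by norm_num) (by norm_num)
    · rw [show (23:ℤ) + 1 = 24 by norm_num, pv24] at key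
      exact mem_helper _ 107 q key (by norm_num) (by norm_num)
    · rw [show (24:ℤ) + 1 = 25 by norm_num, pv25] at key
      exact mem_helper _ 109 q key (by norm_num) (by norm_num)
    · rw [show (25:ℤ) + 1 = 26 by norm_num, pv26] at key
      exact mem_helper _ 113 q key (by norm_num) (by norm_num)
    · rw [show (26:ℤ) + 1 = 27 by norm_num, pv27] at key
      exact mem_helper _ 121 q key (by norm_num) (by norm_num)
    · rw [show (27:ℤ) + 1 = 28 by norm_num, pv28] at key
      exact mem_helper _ 127 q key (by norm_num) (by norm_num)
    · rw [show (28:ℤ) + 1 = 29 by norm_num, pv29] at key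
      exact mem_helper _ 131 q key (by norm_num) (by norm_num)
    · rw [show (29:ℤ) + 1 = 30 by norm_num, pv30] at key
      exact mem_helper _ 137 q key (by norm_num) (by norm_num)
    · rw [show (30:ℤ) + 1 = 31 by norm_num, pv31] at key
      exact mem_helper _ 139 q key (by norm_num) (by norm_num)
    · rw [show (31:ℤ) + 1 = 32 by norm_num, pv32] at key
      exact mem_helper _ 143 q key (by norm_num) (by norm_num)
    · rw [show (32:ℤ) + 1 = 33 by norm_num, pv33] at key
      exact mem_helper _ 149 q key (by norm_num) (by norm_num)
    · rw [show (33:ℤ) + 1 = 34 by norm_num, pv34] at key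
      exact mem_helper _ 151 q key (by norm_num) (by norm_num)
    · rw [show (34:ℤ) + 1 = 35 by norm_num, pv35] at key
      exact mem_helper _ 157 q key (by norm_num) (by norm_num)
    · rw [show (35:ℤ) + 1 = 36 by norm_num, pv36] at key
      exact mem_helper _ 163 q key (by norm_num) (by norm_num)
    · rw [show (36:ℤ) + 1 = 37 by norm_num, pv37] at key
      exact mem_helper _ 167 q key (by norm_num) (by norm_num)
    · rw [show (37:ℤ) + 1 = 38 by norm_num, pv38] at key
      exact mem_helper _ 169 q key (by norm_num) (by norm_num)
    · rw [show (38:ℤ) + 1 = 39 by norm_num, pv39] at key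
      exact mem_helper _ 173 q key (by norm_num) (by norm_num)
    · rw [show (39:ℤ) + 1 = 40 by norm_num, pv40] at key
      exact mem_helper _ 179 q key (by norm_num) (by norm_num)
    · rw [show (40:ℤ) + 1 = 41 by norm_num, pv41] at key
      exact mem_helper _ 181 q key (by norm_num) (by norm_num)
    · rw [show (41:ℤ) + 1 = 42 by norm_num, pv42] at key
      exact mem_helper _ 187 q key (by norm_num) (by norm_num)
    · rw [show (42:ℤ) + 1 = 43 by norm_num, pv43] at key
      exact mem_helper _ 191 q key (by norm_num) (by norm_num)
    · rw [show (43:ℤ) + 1 = 44 by norm_num, pv44] at key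
      exact mem_helper _ 193 q key (by norm_num) (by norm_num)
    · rw [show (44:ℤ) + 1 = 45 by norm_num, pv45] at key
      exact mem_helper _ 197 q key (by norm_num) (by norm_num)
    · rw [show (45:ℤ) + 1 = 46 by norm_num, pv46] at key
      exact mem_helper _ 199 q key (by norm_num) (by norm_num)
    · rw [show (46:ℤ) + 1 = 47 by norm_num, pv47] at key
      exact mem_helper _ 209 q key (by norm_num) (by norm_num)
    · rw [show (47:ℤ) + 1 = 48 by norm_num, pv48] at key
      exact mem_helper _ 211 q key (by norm_num) (by norm_num)
  · rintro ⟨h7, hc⟩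
    have h2 : ¬ (2:ℤ) ∣ m := fun hd => by
      have h := hc.isUnit_of_dvd' hd ⟨105, by norm_num⟩
      rw [Int.isUnit_iff] at h; omega
    have h3 : ¬ (3:ℤ) ∣ m := fun hd => by
      have h := hc.isUnit_of_dvd' hd ⟨70, by norm_num⟩
      rw [Int.isUnit_iff] at h; omega
    have h5 : ¬ (5:ℤ) ∣ m := fun hd => by
      have h := hc.isUnit_of_dvd' hd ⟨42, by norm_num⟩
      rw [Int.isUnit_iff] at h; omega
    have h7d : ¬ (7:ℤ) ∣ m := fun hd => by
      have h := hc.isUnit_of_dvd' hd ⟨30, by norm_num⟩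
      rw [Int.isUnit_iff] at h; omega
    have hlt : (m % 210).toNat < 210 := by omega
    have hnat : (m % 210).toNat = 11 ∨ (m % 210).toNat = 13 ∨ (m % 210).toNat = 17 ∨ (m % 210).toNat = 19 ∨ (m % 210).toNat = 23 ∨ (m % 210).toNat = 29 ∨ (m % 210).toNat = 31 ∨ (m % 210).toNat = 37 ∨ (m % 210).toNat = 41 ∨ (m % 210).toNat = 43 ∨ (m % 210).toNat = 47 ∨ (m % 210).toNat = 53 ∨ (m % 210).toNat = 59 ∨ (m % 210).toNat = 61 ∨ (m % 210).toNat = 67 ∨ (m % 210).toNat = 71 ∨ (m % 210).toNat = 73 ∨ (m % 210).toNat = 79 ∨ (m % 210).toNat = 83 ∨ (m % 210).toNat = 89 ∨ (m % 210).toNat = 97 ∨ (m % 210).toNat = 101 ∨ (m % 210).toNat = 103 ∨ (m % 210).toNat = 107 ∨ (m % 210).toNat = 109 ∨ (m % 210).toNat = 113 ∨ (m % 210).toNat = 121 ∨ (m % 210).toNat = 127 ∨ (m % 210).toNat = 131 ∨ (m % 210).toNat = 137 ∨ (m % 210).toNat = 139 ∨ (m % 210).toNat = 143 ∨ (m % 210).toNat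 = 149 ∨ (m % 210).toNat = 151 ∨ (m % 210).toNat = 157 ∨ (m % 210).toNat = 163 ∨ (m % 210).toNat = 167 ∨ (m % 210).toNat = 169 ∨ (m % 210).toNat = 173 ∨ (m % 210).toNat = 179 ∨ (m % 210).toNat = 181 ∨ (m % 210).toNat = 187 ∨ (m % 210).toNat = 191 ∨ (m % 210).toNat = 193 ∨ (m % 210).toNat = 197 ∨ (m % 210).toNat = 199 ∨ (m % 210).toNat = 209 ∨ (m % 210).toNat = 1 :=
      residues ⟨(m % 210).toNat, hlt⟩ (show ¬2∣(m % 210).toNat by omega)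
        (show ¬3∣(m % 210).toNat by omega) (show ¬5∣(m % 210).toNat by omega)
        (show ¬7∣(m % 210).toNat by omega)
    rcases hnat with h|h|h|h|h|h|h|h|h|h|h|h|h|h|h|h|h|h|h|h|h|h|h|h|h|h|h|h|h|h|h|h|h|h|h|h|h|h|h|h|h|h|h|h|h|h|h|h
    · exact exists_helper m 11 1 (by norm_num) pv1 ((m - 11) / 210).toNat (by omega)
    · exact exists_helper m 13 2 (by norm_num) pv2 ((m - 13) / 210).toNat (by omega)
    · exact exists_helper m 17 3 (by norm_num) pv3 ((m - 17) / 210).toNat (by omega)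
    · exact exists_helper m 19 4 (by norm_num) pv4 ((m - 19) / 210).toNat (by omega)
    · exact exists_helper m 23 5 (by norm_num) pv5 ((m - 23) / 210).toNat (by omega)
    · exact exists_helper m 29 6 (by norm_num) pv6 ((m - 29) / 210).toNat (by omega)
    · exact exists_helper m 31 7 (by norm_num) pv7 ((m - 31) / 210).toNat (by omega)
    · exact exists_helper m 37 8 (by norm_num) pv8 ((m - 37) / 210).toNat (by omega)
    · exact exists_helper m 41 9 (by norm_num) pv9 ((m - 41) / 210).toNat (by omega)
    · exact exists_helper m 43 10 (by norm_num) pv10 ((m - 43) / 210).toNat (by omega)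
    · exact exists_helper m 47 11 (by norm_num) pv11 ((m - 47) / 210).toNat (by omega)
    · exact exists_helper m 53 12 (by norm_num) pv12 ((m - 53) / 210).toNat (by omega)
    · exact exists_helper m 59 13 (by norm_num) pv13 ((m - 59) / 210).toNat (by omega)
    · exact exists_helper m 61 14 (by norm_num) pv14 ((m - 61) / 210).toNat (by omega)
    · exact exists_helper m 67 15 (by norm_num) pv15 ((m - 67) / 210).toNat (by omega)
    · exact exists_helper m 71 16 (by norm_num) pv16 ((m - 71) / 210).toNat (by omega)
    · exact exists_helper m 73 17 (by norm_num) pv17 ((m - 73) / 210).toNat (by omega)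
    · exact exists_helper m 79 18 (by norm_num) pv18 ((m - 79) / 210).toNat (by omega)
    · exact exists_helper m 83 19 (by norm_num) pv19 ((m - 83) / 210).toNat (by omega)
    · exact exists_helper m 89 20 (by norm_num) pv20 ((m - 89) / 210).toNat (by omega)
    · exact exists_helper m 97 21 (by norm_num) pv21 ((m - 97) / 210).toNat (by omega)
    · exact exists_helper m 101 22 (by norm_num) pv22 ((m - 101) / 210).toNat (by omega)
    · exact exists_helper m 103 23 (by norm_num) pv23 ((m - 103) / 210).toNat (by omega)
    · exact exists_helper m 107 24 (by norm_num) pv24 ((m - 107) / 210).toNat (by omega)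
    · exact exists_helper m 109 25 (by norm_num) pv25 ((m - 109) / 210).toNat (by omega)
    · exact exists_helper m 113 26 (by norm_num) pv26 ((m - 113) / 210).toNat (by omega)
    · exact exists_helper m 121 27 (by norm_num) pv27 ((m - 121) / 210).toNat (by omega)
    · exact exists_helper m 127 28 (by norm_num) pv28 ((m - 127) / 210).toNat (by omega)
    · exact exists_helper m 131 29 (by norm_num) pv29 ((m - 131) / 210).toNat (by omega)
    · exact exists_helper m 137 30 (by norm_num) pv30 ((m - 137) / 210).toNat (by omega)
    · exact exists_helper m 139 31 (by norm_num) pv31 ((m - 139) / 210).toNat (by omega)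
    · exact exists_helper m 143 32 (by norm_num) pv32 ((m - 143) / 210).toNat (by omega)
    · exact exists_helper m 149 33 (by norm_num) pv33 ((m - 149) / 210).toNat (by omega)
    · exact exists_helper m 151 34 (by norm_num) pv34 ((m - 151) / 210).toNat (by omega)
    · exact exists_helper m 157 35 (by norm_num) pv35 ((m - 157) / 210).toNat (by omega)
    · exact exists_helper m 163 36 (by norm_num) pv36 ((m - 163) / 210).toNat (by omega)
    · exact exists_helper m 167 37 (by norm_num) pv37 ((m - 167) / 210).toNat (by omega)
    · exact exists_helper m 169 38 (by norm_num) pv38 ((m - 169) / 210).toNat (by omega)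
    · exact exists_helper m 173 39 (by norm_num) pv39 ((m - 173) / 210).toNat (by omega)
    · exact exists_helper m 179 40 (by norm_num) pv40 ((m - 179) / 210).toNat (by omega)
    · exact exists_helper m 181 41 (by norm_num) pv41 ((m - 181) / 210).toNat (by omega)
    · exact exists_helper m 187 42 (by norm_num) pv42 ((m - 187) / 210).toNat (by omega)
    · exact exists_helper m 191 43 (by norm_num) pv43 ((m - 191) / 210).toNat (by omega)
    · exact exists_helper m 193 44 (by norm_num) pv44 ((m - 193) / 210).toNat (by omega)
    · exact exists_helper m 197 45 (by norm_num) pv45 ((m - 197) / 210).toNat (by omega)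
    · exact exists_helper m 199 46 (by norm_num) pv46 ((m - 199) / 210).toNat (by omega)
    · exact exists_helper m 209 47 (by norm_num) pv47 ((m - 209) / 210).toNat (by omega)
    · exact exists_helper m 211 48 (by norm_num) pv48 ((m - 211) / 210).toNat (by omega)
end
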